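/- arXiv:1809.10385 — 6 statements merged into one kernel-verified Lean document; each statement's English description precedes it below -/
import Mathlib

section
/- For a periodic isotropic two-layered (PITL) medium, the Backus-average coefficients satisfy c1111 = c3333 if and only if (μ₂ − μ₁)(μ₂ − μ₁ + λ₂ − λ₁) = 0, i.e., if and only if μ₁ = μ₂ or λ₁ + μ₁ = λ₂ + μ₂. -/
open Filter Real

noncomputable section

/-- Arithmetic average of two values (equal layer thickness). -/
def avg2 (x y : ℝ) : ℝ := (x + y) / 2

/-- Backus-average coefficient c1111 of a PITL medium. -/
def c1111 (l1 l2 m1 m2 : ℝ) : ℝ :=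
  (avg2 (l1 / (l1 + 2 * m1)) (l2 / (l2 + 2 * m2))) ^ 2
      * (avg2 (1 / (l1 + 2 * m1)) (1 / (l2 + 2 * m2)))⁻¹
    + avg2 (4 * (l1 + m1) * m1 / (l1 + 2 * m1)) (4 * (l2 + m2) * m2 / (l2 + 2 * m2))

/-- Backus-average coefficient c1122 of a PITL medium. -/
def c1122 (l1 l2 m1 m2 : ℝ) : ℝ :=
  (avg2 (l1 / (l1 + 2 * m1)) (l2 / (l2 + 2 * m2))) ^ 2
      * (avg2 (1 / (l1 + 2 * m1)) (1 / (l2 + 2 * m2)))⁻¹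
    + avg2 (2 * l1 * m1 / (l1 + 2 * m1)) (2 * l2 * m2 / (l2 + 2 * m2))

/-- Backus-average coefficient c1133 of a PITL medium. -/
def c1133 (l1 l2 m1 m2 : ℝ) : ℝ :=
  avg2 (l1 / (l1 + 2 * m1)) (l2 / (l2 + 2 * m2))
    * (avg2 (1 / (l1 + 2 * m1)) (1 / (l2 + 2 * m2)))⁻¹

/-- Backus-average coefficient c3333 of a PITL medium. -/
def c3333 (l1 l2 m1 m2 : ℝ) : ℝ :=
  (avg2 (1 / (l1 + 2 * m1)) (1 / (l2 + 2 * m2)))⁻¹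

/-- Backus-average coefficient c2323 of a PITL medium. -/
def c2323 (_l1 _l2 m1 m2 : ℝ) : ℝ := (avg2 (1 / m1) (1 / m2))⁻¹

/-- Backus-average coefficient c1212 of a PITL medium. -/
def c1212 (_l1 _l2 m1 m2 : ℝ) : ℝ := avg2 m1 m2

/-- The anisotropy parameter φ of the Backus-average medium. -/
def phi (l1 l2 m1 m2 : ℝ) : ℝ :=
  (c1122 l1 l2 m1 m2 - c1133 l1 l2 m1 m2) / (2 * c1122 l1 l2 m1 m2)

end

/-!
Writing `pᵢ = λᵢ + 2μᵢ` for the P-wave moduli, clearing denominators shows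
`c1111 - c3333 = 2 (μ₂ - μ₁)(μ₂ - μ₁ + λ₂ - λ₁) / (p₁ + p₂)`,
and the stability conditions make `p₁ + p₂` positive.
-/

lemma lame_add_two_mul_pos {l m : ℝ} (hm : 0 < m) (hs : 0 ≤ l + (2 / 3) * m) :
    0 < l + 2 * m := by
  linarith

lemma c1111_sub_c3333 {l1 l2 m1 m2 : ℝ} (h1 : l1 + 2 * m1 ≠ 0) (h2 : l2 + 2 * m2 ≠ 0)
    (h12 : (l1 + 2 * m1) + (l2 + 2 * m2) ≠ 0) :
    c1111 l1 l2 m1 m2 - c3333 l1 l2 m1 m2 =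
      2 * ((m2 - m1) * (m2 - m1 + l2 - l1)) / ((l1 + 2 * m1) + (l2 + 2 * m2)) := by
  have h21 : (l2 + 2 * m2) + (l1 + 2 * m1) ≠ 0 := by rwa [add_comm]
  unfold c1111 c3333 avg2
  field_simp
  ring

lemma c1111_eq_c3333_iff {l1 l2 m1 m2 : ℝ} (h1 : 0 < l1 + 2 * m1) (h2 : 0 < l2 + 2 * m2) :
    c1111 l1 l2 m1 m2 = c3333 l1 l2 m1 m2 ↔ (m2 - m1) * (m2 - m1 + l2 - l1) = 0 := by
  have h12 : 0 < (l1 + 2 * m1) + (l2 + 2 * m2) := add_pos h1 h2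
  rw [← sub_eq_zero, c1111_sub_c3333 h1.ne' h2.ne' h12.ne', div_eq_zero_iff,
    or_iff_left h12.ne', mul_eq_zero, or_iff_right two_ne_zero]

lemma sub_mul_sub_add_sub_eq_zero_iff {l1 l2 m1 m2 : ℝ} :
    (m2 - m1) * (m2 - m1 + l2 - l1) = 0 ↔ m1 = m2 ∨ l1 + m1 = l2 + m2 := by
  rw [mul_eq_zero, sub_eq_zero, eq_comm (a := m2),
    show m2 - m1 + l2 - l1 = (l2 + m2) - (l1 + m1) by ring, sub_eq_zero, eq_comm (a := l2 + m2)]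

/-- For a PITL medium, c1111 = c3333 iff
(μ₂ − μ₁)(μ₂ − μ₁ + λ₂ − λ₁) = 0, i.e., iff μ₁ = μ₂ or λ₁ + μ₁ = λ₂ + μ₂. -/
theorem stmt0 (l1 l2 m1 m2 : ℝ)
    (hm1 : 0 < m1) (hm2 : 0 < m2)
    (hs1 : 0 ≤ l1 + (2 / 3) * m1) (hs2 : 0 ≤ l2 + (2 / 3) * m2) :
    (c1111 l1 l2 m1 m2 = c3333 l1 l2 m1 m2 ↔
      (m2 - m1) * (m2 - m1 + l2 - l1) = 0) ∧
    (c1111 l1 l2 m1 m2 = c3333 l1 l2 m1 m2 ↔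
      (m1 = m2 ∨ l1 + m1 = l2 + m2)) := by
  have hc := c1111_eq_c3333_iff (lame_add_two_mul_pos hm1 hs1) (lame_add_two_mul_pos hm2 hs2)
  exact ⟨hc, hc.trans sub_mul_sub_add_sub_eq_zero_iff⟩
end

section
/- For a periodic isotropic two-layered (PITL) medium, the Backus-average coefficients satisfy c1122 = c1133 if and only if λ₁μ₁ + λ₂μ₂ = λ₁μ₂ + λ₂μ₁, i.e., if and only if μ₁ = μ₂ or λ₁ = λ₂. -/
open Filter Real

theorem c1122_sub_c1133 {l1 l2 m1 m2 : ℝ} (h1 : 0 < l1 + 2 * m1) (h2 : 0 < l2 + 2 * m2) :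
    c1122 l1 l2 m1 m2 - c1133 l1 l2 m1 m2
      = (l1 - l2) * (m1 - m2) / ((l1 + 2 * m1) + (l2 + 2 * m2)) := by
  unfold c1122 c1133 avg2
  field_simp
  ring

theorem c1122_eq_c1133_iff {l1 l2 m1 m2 : ℝ} (h1 : 0 < l1 + 2 * m1) (h2 : 0 < l2 + 2 * m2) :
    c1122 l1 l2 m1 m2 = c1133 l1 l2 m1 m2 ↔ (l1 - l2) * (m1 - m2) = 0 := by
  rw [← sub_eq_zero, c1122_sub_c1133 h1 h2, div_eq_zero_iff, or_iff_left (by positivity)]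

/-- For a PITL medium, c1122 = c1133 iff
λ₁μ₁ + λ₂μ₂ = λ₁μ₂ + λ₂μ₁, i.e., iff μ₁ = μ₂ or λ₁ = λ₂. -/
theorem stmt1 (l1 l2 m1 m2 : ℝ)
    (hm1 : 0 < m1) (hm2 : 0 < m2)
    (hs1 : 0 ≤ l1 + (2 / 3) * m1) (hs2 : 0 ≤ l2 + (2 / 3) * m2) :
    (c1122 l1 l2 m1 m2 = c1133 l1 l2 m1 m2 ↔
      l1 * m1 + l2 * m2 = l1 * m2 + l2 * m1) ∧
    (c1122 l1 l2 m1 m2 = c1133 l1 l2 m1 m2 ↔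
      (m1 = m2 ∨ l1 = l2)) := by
  have h1 : 0 < l1 + 2 * m1 := by linarith
  have h2 : 0 < l2 + 2 * m2 := by linarith
  have expand : (l1 - l2) * (m1 - m2) = (l1 * m1 + l2 * m2) - (l1 * m2 + l2 * m1) := by ring
  rw [c1122_eq_c1133_iff h1 h2]
  refine ⟨by rw [expand, sub_eq_zero], ?_⟩
  rw [mul_eq_zero, sub_eq_zero, sub_eq_zero, or_comm]
end

section
/- For a periodic isotropic two-layered (PITL) medium, if the Backus-average coefficients satisfy both c1111 = c3333 and c1122 = c1133, then μ₁ = μ₂ and consequently c1212 = c2323. In other words, there is no Backus-average transversely isotropic medium with c1212 ≠ c2323, c1111 = c3333 and c1133 = c1111 − 2·c1212. -/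
open Filter Real

/-!
Write aᵢ = λᵢ + 2μᵢ. Since c1111 − c1122 = 2⟨μ⟩ and c3333 − c1133 = ⟨1/a⟩⁻¹ ⟨2μ/a⟩, the two
hypotheses together give ⟨μ⟩⟨1/a⟩ = ⟨μ/a⟩, that is (μ₁ − μ₂)(a₁ − a₂) = 0. If a₁ = a₂ = a, then
λᵢ = a − 2μᵢ and c1122 = c1133 reduces to (μ₁ − μ₂)² = 0. The second claim is the first one,
because c1111 − 2 c1212 = c1122.
-/

theorem c1111_sub_c1122 (l1 l2 m1 m2 : ℝ) (ha1 : l1 + 2 * m1 ≠ 0) (ha2 : l2 + 2 * m2 ≠ 0) :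
    c1111 l1 l2 m1 m2 - c1122 l1 l2 m1 m2 = 2 * c1212 l1 l2 m1 m2 := by
  simp only [c1111, c1122, c1212, avg2]
  field_simp
  ring

theorem c3333_sub_c1133 (l1 l2 m1 m2 : ℝ) (ha1 : l1 + 2 * m1 ≠ 0) (ha2 : l2 + 2 * m2 ≠ 0) :
    c3333 l1 l2 m1 m2 - c1133 l1 l2 m1 m2
      = c3333 l1 l2 m1 m2 * avg2 (2 * m1 / (l1 + 2 * m1)) (2 * m2 / (l2 + 2 * m2)) := by
  simp only [c3333, c1133, avg2]
  field_simp
  ring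

theorem eq_or_add_two_mul_eq_of_c1111_sub_c1122_eq (l1 l2 m1 m2 : ℝ)
    (ha1 : 0 < l1 + 2 * m1) (ha2 : 0 < l2 + 2 * m2)
    (h : c1111 l1 l2 m1 m2 - c1122 l1 l2 m1 m2 = c3333 l1 l2 m1 m2 - c1133 l1 l2 m1 m2) :
    m1 = m2 ∨ l1 + 2 * m1 = l2 + 2 * m2 := by
  rw [c1111_sub_c1122 _ _ _ _ ha1.ne' ha2.ne', c3333_sub_c1133 _ _ _ _ ha1.ne' ha2.ne'] at h
  simp only [c1212, c3333, avg2] at h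
  field_simp at h
  have : (m1 - m2) * ((l1 + 2 * m1) - (l2 + 2 * m2)) = 0 := by linear_combination h
  rcases mul_eq_zero.mp this with h | h
  · exact Or.inl (by linarith)
  · exact Or.inr (by linarith)

theorem eq_of_c1122_eq_c1133_of_add_two_mul_eq (l1 l2 m1 m2 : ℝ)
    (ha : l1 + 2 * m1 ≠ 0) (heq : l1 + 2 * m1 = l2 + 2 * m2)
    (h : c1122 l1 l2 m1 m2 = c1133 l1 l2 m1 m2) : m1 = m2 := by
  obtain ⟨a, rfl, rfl⟩ : ∃ a, l1 = a - 2 * m1 ∧ l2 = a - 2 * m2 :=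
    ⟨l1 + 2 * m1, by ring, by linarith⟩
  simp only [c1122, c1133, avg2, sub_add_cancel] at h ha
  field_simp at h
  have : (m1 - m2) ^ 2 = 0 := by linear_combination (-1 / 4 : ℝ) * h
  exact sub_eq_zero.mp (pow_eq_zero_iff two_ne_zero |>.mp this)

theorem c1212_eq_c2323_self (l1 l2 m : ℝ) : c1212 l1 l2 m m = c2323 l1 l2 m m := by
  simp [c1212, c2323, avg2]

/-- For a PITL medium, if c1111 = c3333 and c1122 = c1133 then μ₁ = μ₂
and consequently c1212 = c2323; in other words, there is no Backus-average TI medium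
with c1212 ≠ c2323, c1111 = c3333 and c1133 = c1111 − 2·c1212. -/
theorem stmt3 (l1 l2 m1 m2 : ℝ)
    (hm1 : 0 < m1) (hm2 : 0 < m2)
    (hs1 : 0 ≤ l1 + (2 / 3) * m1) (hs2 : 0 ≤ l2 + (2 / 3) * m2) :
    (c1111 l1 l2 m1 m2 = c3333 l1 l2 m1 m2 →
      c1122 l1 l2 m1 m2 = c1133 l1 l2 m1 m2 →
      m1 = m2 ∧ c1212 l1 l2 m1 m2 = c2323 l1 l2 m1 m2) ∧
    ¬ (c1212 l1 l2 m1 m2 ≠ c2323 l1 l2 m1 m2 ∧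
        c1111 l1 l2 m1 m2 = c3333 l1 l2 m1 m2 ∧
        c1133 l1 l2 m1 m2 = c1111 l1 l2 m1 m2 - 2 * c1212 l1 l2 m1 m2) := by
  have ha1 : 0 < l1 + 2 * m1 := by linarith
  have ha2 : 0 < l2 + 2 * m2 := by linarith
  have hmu : c1111 l1 l2 m1 m2 = c3333 l1 l2 m1 m2 →
      c1122 l1 l2 m1 m2 = c1133 l1 l2 m1 m2 →
      m1 = m2 ∧ c1212 l1 l2 m1 m2 = c2323 l1 l2 m1 m2 := by
    intro h11 h22
    have hm : m1 = m2 := by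
      rcases eq_or_add_two_mul_eq_of_c1111_sub_c1122_eq l1 l2 m1 m2 ha1 ha2
        (by rw [h11, h22]) with hm | ha
      · exact hm
      · exact eq_of_c1122_eq_c1133_of_add_two_mul_eq l1 l2 m1 m2 ha1.ne' ha h22
    exact ⟨hm, hm ▸ c1212_eq_c2323_self l1 l2 m1⟩
  refine ⟨hmu, fun ⟨hne, h11, h13⟩ => hne (hmu h11 ?_).2⟩
  linarith [c1111_sub_c1122 l1 l2 m1 m2 ha1.ne' ha2.ne']
end

section
/- There exist Lamé parameters λ₁, λ₂, μ₁, μ₂ satisfying the stability conditions (μᵢ > 0 and λᵢ + (2/3)μᵢ ≥ 0) such that the Backus-average coefficients of the corresponding periodic isotropic two-layered medium satisfy c1212 ≠ c2323, c1111 = c3333 and c1122 ≠ c1133; that is, a transversely isotropic equivalent medium with c1212 ≠ c2323, c1111 = c3333 and c1133 ≠ c1111 − 2·c1212 exists. -/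
open Filter Real

/-!
Two identities hold for every medium: `c1111 - 2 * c1212 = c1122` (layerwise,
`4(λ+μ)μ/(λ+2μ) - 2μ = 2λμ/(λ+2μ)`), so the last two conditions coincide; and `c2323`,
`c1212` are the harmonic and arithmetic means of `μ₁, μ₂`, which differ as soon as `μ₁ ≠ μ₂`.
It remains to exhibit one medium with `c1111 = c3333` and `c1122 ≠ c1133`:
`(λ₁, μ₁) = (1, 1)`, `(λ₂, μ₂) = (0, 2)` gives `c1111 = c3333 = 24/7`, `c1122 = 3/7` and
`c1133 = 4/7`.
-/

section Identities

variable {l1 l2 m1 m2 : ℝ}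

theorem c1111_sub_two_mul_c1212 (h1 : l1 + 2 * m1 ≠ 0) (h2 : l2 + 2 * m2 ≠ 0) :
    c1111 l1 l2 m1 m2 - 2 * c1212 l1 l2 m1 m2 = c1122 l1 l2 m1 m2 := by
  simp only [c1111, c1122, c1212, avg2]
  field_simp
  ring

theorem c2323_lt_c1212 (hm1 : 0 < m1) (hm2 : 0 < m2) (hne : m1 ≠ m2) :
    c2323 l1 l2 m1 m2 < c1212 l1 l2 m1 m2 := by
  have hsq : 0 < (m1 - m2) ^ 2 := sq_pos_of_ne_zero (sub_ne_zero.mpr hne)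
  simp only [c2323, c1212, avg2]
  rw [one_div_add_one_div hm1.ne' hm2.ne', inv_div, div_div_eq_mul_div,
    div_lt_div_iff₀ (by positivity) two_pos]
  nlinarith

end Identities

section Example

theorem c1111_example : c1111 1 0 1 2 = 24 / 7 := by norm_num [c1111, avg2]

theorem c3333_example : c3333 1 0 1 2 = 24 / 7 := by norm_num [c3333, avg2]

theorem c1122_example : c1122 1 0 1 2 = 3 / 7 := by norm_num [c1122, avg2]

theorem c1133_example : c1133 1 0 1 2 = 4 / 7 := by norm_num [c1133, avg2]

end Example

/-- There exist Lamé parameters satisfying the stability conditions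
such that c1212 ≠ c2323, c1111 = c3333 and c1122 ≠ c1133 (equivalently,
c1133 ≠ c1111 − 2·c1212). -/
theorem stmt4 :
    ∃ l1 l2 m1 m2 : ℝ,
      0 < m1 ∧ 0 < m2 ∧ 0 ≤ l1 + (2 / 3) * m1 ∧ 0 ≤ l2 + (2 / 3) * m2 ∧
      c1212 l1 l2 m1 m2 ≠ c2323 l1 l2 m1 m2 ∧
      c1111 l1 l2 m1 m2 = c3333 l1 l2 m1 m2 ∧
      c1122 l1 l2 m1 m2 ≠ c1133 l1 l2 m1 m2 ∧
      c1133 l1 l2 m1 m2 ≠ c1111 l1 l2 m1 m2 - 2 * c1212 l1 l2 m1 m2 := by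
  have hc1122_ne : c1122 1 0 1 2 ≠ c1133 1 0 1 2 := by
    rw [c1122_example, c1133_example]
    norm_num
  refine ⟨1, 0, 1, 2, by norm_num, by norm_num, by norm_num, by norm_num,
    (c2323_lt_c1212 one_pos two_pos (by norm_num)).ne', by rw [c1111_example, c3333_example],
    hc1122_ne, ?_⟩
  rw [c1111_sub_two_mul_c1212 (by norm_num) (by norm_num)]
  exact hc1122_ne.symm
end

section
/- Let A, B, C, F, M be real numbers with A = B + 2M and C > 0. Then the pair of equations F² + 2MF − BC = 0 and 2M = C − F holds if and only if B = F and A = C. -/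
/-- For reals A, B, C, F, M with A = B + 2M and C > 0, the equations
F² + 2MF − BC = 0 and 2M = C − F hold iff B = F and A = C. -/
theorem stmt7 (A B C F M : ℝ) (hA : A = B + 2 * M) (hC : 0 < C) :
    (F ^ 2 + 2 * M * F - B * C = 0 ∧ 2 * M = C - F) ↔ (B = F ∧ A = C) := by
  constructor
  · rintro ⟨hquad, hM⟩
    have hfactor : C * (F - B) = 0 := by
      rw [← hquad, hM]
      ring
    have hBF : B = F := (sub_eq_zero.mp ((mul_eq_zero.mp hfactor).resolve_left hC.ne')).symm
    exact ⟨hBF, by linarith⟩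
  · rintro ⟨hBF, hAC⟩
    have hM : 2 * M = C - F := by linarith
    refine ⟨?_, hM⟩
    rw [hM, hBF]
    ring
end

section
/- There exist Lamé parameters λ₁, λ₂, μ₁, μ₂ satisfying the stability conditions (μᵢ > 0, λᵢ + (2/3)μᵢ ≥ 0) with λ₁ + 2μ₁ = λ₂ + 2μ₂ and φ > 0, and there also exist such parameters with λ₁ + 2μ₁ = λ₂ + 2μ₂ and φ < 0; hence for constant P-wave modulus the anisotropy parameter φ can take either sign. -/
/-! Writing `λᵢ = M - 2μᵢ` for the common P-wave modulus `M`, the Backus averages collapse and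
`φ = (μ₁ - μ₂)² / (2((μ₁ - μ₂)² + M(μ₁ + μ₂) - M²))`, which has the sign of its denominator.
For `M = 4` stability means `μᵢ ≤ 3`, and the denominator is positive at `μ = (3, 1)` and
negative at `μ = (1, 2)`. -/

open Filter Real

section ConstantPWaveModulus

variable {M : ℝ} (m1 m2 : ℝ)

theorem c1122_of_pWaveModulus_eq (hM : M ≠ 0) :
    c1122 (M - 2 * m1) (M - 2 * m2) m1 m2 = (M ^ 2 - M * (m1 + m2) - (m1 - m2) ^ 2) / M := by
  simp only [c1122, avg2, sub_add_cancel]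
  field_simp
  ring

theorem c1122_sub_c1133_of_pWaveModulus_eq (hM : M ≠ 0) :
    c1122 (M - 2 * m1) (M - 2 * m2) m1 m2 - c1133 (M - 2 * m1) (M - 2 * m2) m1 m2
      = -(m1 - m2) ^ 2 / M := by
  simp only [c1122, c1133, avg2, sub_add_cancel]
  field_simp
  ring

theorem phi_of_pWaveModulus_eq (hM : M ≠ 0) :
    phi (M - 2 * m1) (M - 2 * m2) m1 m2
      = (m1 - m2) ^ 2 / (2 * ((m1 - m2) ^ 2 + M * (m1 + m2) - M ^ 2)) := by
  rw [phi, c1122_sub_c1133_of_pWaveModulus_eq m1 m2 hM, c1122_of_pWaveModulus_eq m1 m2 hM,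
    mul_div_assoc', div_div_div_cancel_right₀ hM, neg_div, ← div_neg]
  ring_nf

end ConstantPWaveModulus

/-- For constant P-wave modulus λ₁ + 2μ₁ = λ₂ + 2μ₂, the
anisotropy parameter φ can take either sign. -/
theorem stmt18 :
    (∃ l1 l2 m1 m2 : ℝ,
      0 < m1 ∧ 0 < m2 ∧ 0 ≤ l1 + (2 / 3) * m1 ∧ 0 ≤ l2 + (2 / 3) * m2 ∧
      l1 + 2 * m1 = l2 + 2 * m2 ∧ 0 < phi l1 l2 m1 m2) ∧
    (∃ l1 l2 m1 m2 : ℝ,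
      0 < m1 ∧ 0 < m2 ∧ 0 ≤ l1 + (2 / 3) * m1 ∧ 0 ≤ l2 + (2 / 3) * m2 ∧
      l1 + 2 * m1 = l2 + 2 * m2 ∧ phi l1 l2 m1 m2 < 0) := by
  have hM : (4 : ℝ) ≠ 0 := by norm_num
  refine ⟨⟨4 - 2 * 3, 4 - 2 * 1, 3, 1, ?_⟩, ⟨4 - 2 * 1, 4 - 2 * 2, 1, 2, ?_⟩⟩ <;>
    rw [phi_of_pWaveModulus_eq _ _ hM] <;> norm_num
end
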